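/- Let W = (W^{ij}_s) be a tensor of scalars (1 ≤ i,j,s ≤ n) over a field K, and define for a Lie algebra 𝒢 the bracket on 𝒢^n by ([x,y]_W)_s = Σ_{i,j} W^{ij}_s [x_i, y_j]. If W^{ij}_s = W^{ji}_s for all i,j,s and Σ_k (W_i^{sk} W_k^{qp} − W_i^{qk} W_k^{sp}) = 0 for all i,s,q,p, then [·,·]_W is a Lie bracket on 𝒢^n for every Lie algebra 𝒢. -/
import Mathlib

private lemma mylie_sum {G : Type*} [LieRing G] {α : Type*} (t : Finset α) (x : G) (f : α → G) :
    ⁅x, ∑ a ∈ t, f a⁆ = ∑ a ∈ t, ⁅x, f a⁆ := by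
  induction t using Finset.cons_induction with
  | empty => simp
  | cons a t ha ih => simp [Finset.sum_cons, ih]

private lemma mysum_lie {G : Type*} [LieRing G] {α : Type*} (t : Finset α) (x : G) (f : α → G) :
    ⁅∑ a ∈ t, f a, x⁆ = ∑ a ∈ t, ⁅f a, x⁆ := by
  induction t using Finset.cons_induction with
  | empty => simp
  | cons a t ha ih => simp [Finset.sum_cons, ih]

private lemma move13 {M : Type*} [AddCommMonoid M] {α β γ : Type*}
    [Fintype α] [Fintype β] [Fintype γ] (f : α → β → γ → M) :
    ∑ a, ∑ b, ∑ c, f a b c = ∑ b, ∑ c, ∑ a, f a b c := by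
  rw [Finset.sum_comm]
  exact Finset.sum_congr rfl fun b _ => Finset.sum_comm

set_option maxHeartbeats 1000000 in
/-- If `W` is symmetric in its upper indices and satisfies the
commutation condition, then the bracket `([x,y]_W)_s = ∑ W^{ij}_s [x_i, y_j]`
is a Lie bracket (antisymmetric and satisfying the Jacobi/Leibniz identity)
on `𝒢^n` for every Lie algebra `𝒢`. -/
theorem stmt_0 (K : Type*) [Field K] (n : ℕ) (W : Fin n → Fin n → Fin n → K)
    (hsym : ∀ i j s, W i j s = W j i s)
    (hcom : ∀ i s q p, ∑ k, (W s k i * W q p k - W q k i * W s p k) = 0)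
    (G : Type*) [LieRing G] [LieAlgebra K G]
    (b : (Fin n → G) → (Fin n → G) → (Fin n → G))
    (hb : ∀ x y s, b x y s = ∑ i, ∑ j, W i j s • ⁅x i, y j⁆) :
    (∀ x y, b x y = - b y x) ∧
    (∀ x y z, b x (b y z) = b (b x y) z + b y (b x z)) := by
  constructor
  · intro x y
    funext s
    simp only [hb, Pi.neg_apply]
    rw [Finset.sum_comm]
    rw [← neg_neg (∑ j, ∑ i, W i j s • ⁅x i, y j⁆)]
    congr 1
    rw [← Finset.sum_neg_distrib]
    refine Finset.sum_congr rfl fun j _ => ?_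
    rw [← Finset.sum_neg_distrib]
    refine Finset.sum_congr rfl fun i _ => ?_
    rw [hsym j i s, ← smul_neg, ← lie_skew, neg_neg]
  · intro x y z
    funext s
    simp only [hb, Pi.add_apply]
    simp only [mylie_sum, mysum_lie]
    simp only [lie_smul, smul_lie]
    simp only [Finset.smul_sum, smul_smul]
    simp only [lie_lie, smul_sub, Finset.sum_sub_distrib]
    -- canonicalize the left-hand side
    have hL : (∑ i, ∑ j, ∑ p, ∑ q, (W i j s * W p q j) • ⁅x i, ⁅y p, z q⁆⁆)
        = ∑ i, ∑ p, ∑ q, (∑ j, W i j s * W p q j) • ⁅x i, ⁅y p, z q⁆⁆ := by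
      refine Finset.sum_congr rfl fun i _ => ?_
      rw [move13 (fun j p q => (W i j s * W p q j) • ⁅x i, ⁅y p, z q⁆⁆)]
      exact Finset.sum_congr rfl fun p _ => Finset.sum_congr rfl fun q _ =>
        (Finset.sum_smul).symm
    -- canonicalize the first right-hand summand (both U and V parts)
    have hR1 : ∀ (T : Fin n → Fin n → Fin n → G),
        (∑ k, ∑ q, ∑ i, ∑ p, (W k q s * W i p k) • T i p q)
        = ∑ i, ∑ p, ∑ q, (∑ k, W k q s * W i p k) • T i p q := by
      intro T
      calc (∑ k, ∑ q, ∑ i, ∑ p, (W k q s * W i p k) • T i p q)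
          = ∑ k, ∑ i, ∑ p, ∑ q, (W k q s * W i p k) • T i p q :=
            Finset.sum_congr rfl fun k _ =>
              move13 (fun q i p => (W k q s * W i p k) • T i p q)
        _ = ∑ i, ∑ p, ∑ k, ∑ q, (W k q s * W i p k) • T i p q :=
            move13 (fun k i p => ∑ q, (W k q s * W i p k) • T i p q)
        _ = ∑ i, ∑ p, ∑ q, ∑ k, (W k q s * W i p k) • T i p q :=
            Finset.sum_congr rfl fun i _ => Finset.sum_congr rfl fun p _ =>
              Finset.sum_comm
        _ = ∑ i, ∑ p, ∑ q, (∑ k, W k q s * W i p k) • T i p q :=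
            Finset.sum_congr rfl fun i _ => Finset.sum_congr rfl fun p _ =>
              Finset.sum_congr rfl fun q _ => (Finset.sum_smul).symm
    -- canonicalize the second right-hand summand
    have hR2 : (∑ p, ∑ j, ∑ i, ∑ q, (W p j s * W i q j) • ⁅y p, ⁅x i, z q⁆⁆)
        = ∑ i, ∑ p, ∑ q, (∑ j, W p j s * W i q j) • ⁅y p, ⁅x i, z q⁆⁆ := by
      calc (∑ p, ∑ j, ∑ i, ∑ q, (W p j s * W i q j) • ⁅y p, ⁅x i, z q⁆⁆)
          = ∑ p, ∑ i, ∑ q, ∑ j, (W p j s * W i q j) • ⁅y p, ⁅x i, z q⁆⁆ :=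
            Finset.sum_congr rfl fun p _ =>
              move13 (fun j i q => (W p j s * W i q j) • ⁅y p, ⁅x i, z q⁆⁆)
        _ = ∑ i, ∑ p, ∑ q, ∑ j, (W p j s * W i q j) • ⁅y p, ⁅x i, z q⁆⁆ :=
            Finset.sum_comm
        _ = ∑ i, ∑ p, ∑ q, (∑ j, W p j s * W i q j) • ⁅y p, ⁅x i, z q⁆⁆ :=
            Finset.sum_congr rfl fun i _ => Finset.sum_congr rfl fun p _ =>
              Finset.sum_congr rfl fun q _ => (Finset.sum_smul).symm
    rw [hL, hR1, hR1, hR2]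
    -- scalar identities
    have e1 : ∀ i p q : Fin n, (∑ k, W k q s * W i p k) = ∑ j, W i j s * W p q j := by
      intro i p q
      have h := hcom s i q p
      rw [Finset.sum_sub_distrib, sub_eq_zero] at h
      calc (∑ k, W k q s * W i p k)
          = ∑ k, W q k s * W i p k :=
            Finset.sum_congr rfl fun k _ => by rw [hsym k q s]
        _ = ∑ k, W i k s * W q p k := h.symm
        _ = ∑ j, W i j s * W p q j :=
            Finset.sum_congr rfl fun k _ => by rw [hsym q p k]
    have e2 : ∀ i p q : Fin n, (∑ j, W p j s * W i q j) = ∑ j, W i j s * W p q j := by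
      intro i p q
      have h := hcom s i p q
      rw [Finset.sum_sub_distrib, sub_eq_zero] at h
      exact h.symm
    simp only [e1, e2]
    rw [sub_add_cancel]
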